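/- Fix i, t ∈ ½ℤ and let D = ad(L_{i,i}^t, L_{−i+1,−i+1}^{−t}) : A → A be the left multiplication D(x) = [L_{i,i}^t, L_{−i+1,−i+1}^{−t}, x]. Then D is semisimple: every basis element L_{l,m}^r is an eigenvector of D with eigenvalue t(m−l), so A is the direct sum of the eigenspaces A(k,t) = span{L_{l,m}^r : t(m−l) = k}. Moreover, if t ≠ 0 then the kernel of D equals H = span{L_{j,j}^s : j, s ∈ ½ℤ}, and if t = 0 then D = 0. -/

import Mathlib

noncomputable section

/-- The half-integers `½ℤ = {k/2 : k ∈ ℤ}` as an additive subgroup of `ℚ`. -/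
def HalfInt : AddSubgroup ℚ where
  carrier := {q | ∃ k : ℤ, q = k / 2}
  add_mem' := by rintro a b ⟨k, rfl⟩ ⟨j, rfl⟩; exact ⟨k + j, by push_cast; ring⟩
  zero_mem' := ⟨0, by norm_num⟩
  neg_mem' := by rintro a ⟨k, rfl⟩; exact ⟨-k, by push_cast; ring⟩

/-- The half-integer `k/2`. -/
def hh (k : ℤ) : HalfInt := ⟨(k : ℚ) / 2, ⟨k, rfl⟩⟩

variable (F : Type*) [Field F] [CharZero F]

/-- `A` is the group algebra of `(½ℤ)³` over `F`; the basis element indexed by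
`(l, m, r)` is `L_{l,m}^r`. -/
abbrev A := AddMonoidAlgebra F (HalfInt × HalfInt × HalfInt)

/-- The basis element `L_{l,m}^r` of `A`. -/
def L (l m r : HalfInt) : A F := AddMonoidAlgebra.single (l, m, r) 1

/-- `M(α₁,α₂,α₃)`: the determinant of the 3×3 matrix with rows `(r₁,r₂,r₃)`,
`(l₁,l₂,l₃)`, `(m₁,m₂,m₃)`, computed in `ℚ` and mapped into `F`.
Here an index `α = (l, m, r)`. -/
def Mdet (α β γ : HalfInt × HalfInt × HalfInt) : F :=
  ((Matrix.det !![(α.2.2 : ℚ), (β.2.2 : ℚ), (γ.2.2 : ℚ);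
                  (α.1 : ℚ),   (β.1 : ℚ),   (γ.1 : ℚ);
                  (α.2.1 : ℚ), (β.2.1 : ℚ), (γ.2.1 : ℚ)] : ℚ) : F)

/-- The shift `ν = (1, 1, 0)` (in coordinates `(l, m, r)`). -/
def nu : HalfInt × HalfInt × HalfInt := (hh 2, hh 2, hh 0)

/-- The alternating trilinear bracket on `A`, determined on basis elements by
`[L_{l₁,m₁}^{r₁}, L_{l₂,m₂}^{r₂}, L_{l₃,m₃}^{r₃}]
  = M(α₁,α₂,α₃) · L_{l₁+l₂+l₃-1, m₁+m₂+m₃-1}^{r₁+r₂+r₃}`. -/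
def bracket (x y z : A F) : A F :=
  Finsupp.sum x.coeff fun α a => Finsupp.sum y.coeff fun β b => Finsupp.sum z.coeff fun γ c =>
    AddMonoidAlgebra.single (α + β + γ - nu) (a * b * c * Mdet F α β γ)

/-- The subspace `H` of `A` spanned by `{L_{j,j}^s : j, s ∈ ½ℤ}`. -/
def H (F : Type*) [Field F] [CharZero F] : Submodule F (A F) :=
  Submodule.span F {x : A F | ∃ j s : HalfInt, x = L F j j s}

/-- The eigenspace `A(k, t) = span{L_{l,m}^r : t(m−l) = k}`. -/
def eigSp (F : Type*) [Field F] [CharZero F] (t : HalfInt) (k : F) : Submodule F (A F) :=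
  Submodule.span F
    {x : A F | ∃ l m r : HalfInt,
      ((t : ℚ) : F) * (((m : ℚ) : F) - ((l : ℚ) : F)) = k ∧ x = L F l m r}


/-!
The first two arguments of `D` have indices summing to `ν`, so `D` is diagonal in the basis
`L_{l,m}^r`, with eigenvalue `M((i,i,t), (1-i,1-i,-t), (l,m,r)) = t(m-l)`. Hence `A(k,t)` is the
span of the basis vectors in the fibre over `k` of this eigenvalue function; these fibres partition
the basis, and `ker D` is spanned by the basis vectors of eigenvalue zero, i.e. those with `m = l`
when `t ≠ 0`.
-/

namespace Finsupp

variable {α κ R M : Type*} [Semiring R] [AddCommMonoid M] [Module R M]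

theorem iSupIndep_supported_preimage_singleton (f : α → κ) :
    iSupIndep fun k => supported M R (f ⁻¹' {k}) := by
  intro k
  refine (disjoint_supported_supported (s := f ⁻¹' {k}) (t := {a | f a ≠ k}) ?_).mono_right ?_
  · exact Set.disjoint_left.2 fun a hk hne => hne hk
  · exact iSup₂_le fun j hj => supported_mono fun a ha => (Set.mem_preimage.1 ha).trans_ne hj

theorem iSup_supported_preimage_singleton (f : α → κ) :
    ⨆ k, supported M R (f ⁻¹' {k}) = ⊤ := by
  rw [← supported_iUnion, ← supported_univ]
  congr
  ext
  simp

end Finsupp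

namespace AddMonoidAlgebra

variable {G κ R S : Type*} [Semiring R] [Semiring S] [Module R S]

theorem iSupIndep_supported_preimage_singleton (f : G → κ) :
    iSupIndep fun k => supported R S (f ⁻¹' {k}) := by
  simp_rw [supported_eq_map]
  exact LinearMap.iSupIndep_map _ (coeffLinearEquiv R).symm.injective
    (Finsupp.iSupIndep_supported_preimage_singleton f)

theorem iSup_supported_preimage_singleton (f : G → κ) :
    ⨆ k, supported R S (f ⁻¹' {k}) = ⊤ := by
  simp_rw [supported_eq_map, ← Submodule.map_iSup, Finsupp.iSup_supported_preimage_singleton,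
    Submodule.map_top, LinearEquiv.range]

end AddMonoidAlgebra

def adEigenvalue (K : Type*) [DivisionRing K] (t : HalfInt) (γ : HalfInt × HalfInt × HalfInt) : K :=
  ((t : ℚ) : K) * (((γ.2.1 : ℚ) : K) - ((γ.1 : ℚ) : K))

theorem adEigenvalue_eq_zero_iff {t : HalfInt} (ht : t ≠ 0) (γ : HalfInt × HalfInt × HalfInt) :
    adEigenvalue F t γ = 0 ↔ γ.2.1 = γ.1 := by
  have ht' : ((t : ℚ) : F) ≠ 0 := Rat.cast_ne_zero.2 (by simpa using ht)
  rw [adEigenvalue, mul_eq_zero, or_iff_right ht', sub_eq_zero, Rat.cast_inj, Subtype.coe_inj]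

theorem eigSp_eq_supported (t : HalfInt) (k : F) :
    eigSp F t k = AddMonoidAlgebra.supported F F (adEigenvalue F t ⁻¹' {k}) := by
  rw [AddMonoidAlgebra.supported_eq_span_single, eigSp]
  congr 1
  ext x
  simp [L, adEigenvalue, eq_comm (a := x)]

theorem H_eq_supported : H F = AddMonoidAlgebra.supported F F {γ | γ.2.1 = γ.1} := by
  rw [AddMonoidAlgebra.supported_eq_span_single, H]
  congr 1
  ext x
  simp [L, eq_comm (a := x)]

theorem bracket_single_single (K : Type*) [Field K] (α β : HalfInt × HalfInt × HalfInt) (a b : K)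
    (z : A K) :
    bracket K (.single α a) (.single β b) z =
      z.coeff.sum fun γ c => .single (α + β + γ - nu) (a * b * c * Mdet K α β γ) := by
  simp only [bracket, AddMonoidAlgebra.coeff_single]
  rw [Finsupp.sum_single_index (by simp), Finsupp.sum_single_index (by simp)]

theorem add_neg_add_two_eq_nu (i t : HalfInt) :
    ((i, i, t) : HalfInt × HalfInt × HalfInt) + (-i + hh 2, -i + hh 2, -t) = nu := by
  simp [nu, Subtype.ext_iff, hh]

theorem Mdet_ad_eq_adEigenvalue (i t : HalfInt) (γ : HalfInt × HalfInt × HalfInt) :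
    Mdet F (i, i, t) (-i + hh 2, -i + hh 2, -t) γ = adEigenvalue F t γ := by
  rw [Mdet, Matrix.det_fin_three, adEigenvalue]
  simp only [Matrix.of_apply, Matrix.cons_val', Matrix.cons_val_zero, Matrix.cons_val_one,
    Matrix.cons_val, Matrix.cons_val_fin_one]
  push_cast [hh]
  ring

theorem bracket_ad_eq_sum (i t : HalfInt) (x : A F) :
    bracket F (L F i i t) (L F (-i + hh 2) (-i + hh 2) (-t)) x =
      x.coeff.sum fun γ c => .single γ (c * adEigenvalue F t γ) := by
  simp only [L, bracket_single_single, add_neg_add_two_eq_nu, add_sub_cancel_left,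
    Mdet_ad_eq_adEigenvalue, one_mul]

theorem bracket_ad_L (i t l m r : HalfInt) :
    bracket F (L F i i t) (L F (-i + hh 2) (-i + hh 2) (-t)) (L F l m r) =
      adEigenvalue F t (l, m, r) • L F l m r := by
  rw [bracket_ad_eq_sum, L, AddMonoidAlgebra.coeff_single, Finsupp.sum_single_index (by simp),
    AddMonoidAlgebra.smul_single', one_mul, mul_one]

theorem coeff_bracket_ad (i t : HalfInt) (x : A F) (γ : HalfInt × HalfInt × HalfInt) :
    (bracket F (L F i i t) (L F (-i + hh 2) (-i + hh 2) (-t)) x).coeff γ =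
      x.coeff γ * adEigenvalue F t γ := by
  classical
  rw [bracket_ad_eq_sum, AddMonoidAlgebra.coeff_finsuppSum, Finsupp.sum_apply]
  simp only [AddMonoidAlgebra.coeff_single, Finsupp.single_apply, Finsupp.sum_ite_eq',
    Finsupp.mem_support_iff]
  split_ifs with h
  · rfl
  · rw [not_not.1 h, zero_mul]

theorem bracket_ad_eq_zero_iff (i t : HalfInt) (x : A F) :
    bracket F (L F i i t) (L F (-i + hh 2) (-i + hh 2) (-t)) x = 0 ↔
      x ∈ AddMonoidAlgebra.supported F F (adEigenvalue F t ⁻¹' {0}) := by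
  simp only [← AddMonoidAlgebra.coeff_eq_zero, Finsupp.ext_iff, coeff_bracket_ad,
    AddMonoidAlgebra.mem_supported', Finsupp.zero_apply, mul_eq_zero, Set.mem_preimage,
    Set.mem_singleton_iff]
  exact forall_congr' fun γ => or_iff_not_imp_right

/-- the left multiplication
`D = ad(L_{i,i}^t, L_{−i+1,−i+1}^{−t})` is semisimple: every basis element
`L_{l,m}^r` is an eigenvector with eigenvalue `t(m−l)`, and `A` is the direct sum
of the eigenspaces `A(k,t)`.  Moreover if `t ≠ 0` then `ker D = H`, and if
`t = 0` then `D = 0`. -/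
theorem ad_semisimple (i t : HalfInt) :
    (∀ l m r : HalfInt,
        bracket F (L F i i t) (L F (-i + hh 2) (-i + hh 2) (-t)) (L F l m r)
          = (((t : ℚ) : F) * (((m : ℚ) : F) - ((l : ℚ) : F))) • L F l m r)
      ∧ iSupIndep (fun k : F => eigSp F t k)
      ∧ (⨆ k : F, eigSp F t k) = ⊤
      ∧ (t ≠ 0 → ∀ x : A F,
          bracket F (L F i i t) (L F (-i + hh 2) (-i + hh 2) (-t)) x = 0 ↔ x ∈ H F)
      ∧ (t = 0 → ∀ x : A F,
          bracket F (L F i i t) (L F (-i + hh 2) (-i + hh 2) (-t)) x = 0) := by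
  simp only [eigSp_eq_supported, bracket_ad_eq_zero_iff]
  refine ⟨bracket_ad_L F i t, AddMonoidAlgebra.iSupIndep_supported_preimage_singleton _,
    AddMonoidAlgebra.iSup_supported_preimage_singleton _, fun ht x => ?_, fun ht x => ?_⟩
  · rw [H_eq_supported]
    simp only [Set.preimage, Set.mem_singleton_iff, adEigenvalue_eq_zero_iff F ht]
  · simp [AddMonoidAlgebra.mem_supported', adEigenvalue, ht]
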